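/- arXiv:2512.18632 — 4 statements merged into one kernel-verified Lean document; each statement's English description precedes it below -/
import Mathlib

section
/- Let θ > 0, ε > 0, and a, b ∈ ℝ with θ ≥ |a - b|/ε. Let μ be a probability measure on ℝ and define f_a(y) = ∫ p_θ(y - t - a) dμ(t) and f_b(y) = ∫ p_θ(y - t - b) dμ(t), where p_θ is the Laplace density with scale θ. Then for all y ∈ ℝ, f_a(y) ≤ e^ε · f_b(y). -/
open MeasureTheory

/-- The Laplace density with scale parameter `θ`. -/
noncomputable def lap (θ z : ℝ) : ℝ := (1 / (2 * θ)) * Real.exp (-|z| / θ)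

lemma lap_nonneg (θ z : ℝ) (hθ : 0 < θ) : 0 ≤ lap θ z := by
  unfold lap
  positivity

lemma lap_le (θ z : ℝ) (hθ : 0 < θ) : lap θ z ≤ 1 / (2 * θ) := by
  unfold lap
  have h2 : (0:ℝ) ≤ 1 / (2 * θ) := by positivity
  nlinarith [h2, Real.exp_le_one_iff.2 (show -|z| / θ ≤ 0 by
    apply div_nonpos_of_nonpos_of_nonneg (neg_nonpos.2 (abs_nonneg z)) hθ.le), abs_nonneg z]

lemma lap_cont (θ y c : ℝ) : Continuous (fun t : ℝ => lap θ (y - t - c)) := by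
  unfold lap
  fun_prop

lemma lap_ratio (θ ε a b z : ℝ) (hθ : 0 < θ) (hε : 0 < ε)
    (hcal : |a - b| / ε ≤ θ) :
    lap θ (z - a) ≤ Real.exp ε * lap θ (z - b) := by
  unfold lap
  rw [mul_left_comm, ← Real.exp_add]
  have h1 : -|z - a| / θ ≤ ε + -|z - b| / θ := by
    have htri : |z - b| - |a - b| ≤ |z - a| := by
      have := abs_sub_abs_le_abs_sub (z - b) (a - b)
      have : |z - b| - |a - b| ≤ |(z - b) - (a - b)| := this
      calc |z - b| - |a - b| ≤ |(z - b) - (a - b)| := this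
        _ = |z - a| := by ring_nf
    have hab : |a - b| ≤ ε * θ := by
      have := (div_le_iff₀ hε).1 hcal
      linarith [mul_comm ε θ ▸ this]
    rw [div_le_iff₀ hθ, add_mul, div_mul_cancel₀ _ (ne_of_gt hθ)]
    nlinarith
  have := Real.exp_le_exp.2 h1
  have h2 : 0 ≤ 1 / (2 * θ) := by positivity
  nlinarith

/-- Sufficient condition for `(ε, S_{a,b})`-pufferfish privacy: if `θ ≥ |a - b|/ε`, then
the Laplace-noised densities conditioned on a user reporting `a` or `b` are within a
multiplicative factor `e^ε` of each other. -/
theorem pufferfish_value_pair (θ ε a b : ℝ) (hθ : 0 < θ) (hε : 0 < ε)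
    (hcal : |a - b| / ε ≤ θ)
    (μ : Measure ℝ) [IsProbabilityMeasure μ] (y : ℝ) :
    (∫ t, lap θ (y - t - a) ∂μ) ≤ Real.exp ε * ∫ t, lap θ (y - t - b) ∂μ := by
  rw [← integral_const_mul]
  have hint : Integrable (fun t => Real.exp ε * lap θ (y - t - b)) μ := by
    apply Integrable.mono' (integrable_const (Real.exp ε * (1 / (2 * θ))))
    · exact (continuous_const.mul (lap_cont θ y b)).aestronglyMeasurable
    · filter_upwards with t
      rw [Real.norm_eq_abs,
        abs_of_nonneg (mul_nonneg (Real.exp_pos ε).le (lap_nonneg θ _ hθ))]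
      exact mul_le_mul_of_nonneg_left (lap_le θ _ hθ) (Real.exp_pos ε).le
  refine integral_mono_of_nonneg ?_ hint ?_
  · filter_upwards with t using lap_nonneg θ _ hθ
  · filter_upwards with t
    have h : (y - t) - a = (y - t) - a := rfl
    simpa [sub_sub] using lap_ratio θ ε a b (y - t) hθ hε hcal
end

section
/- Let θ > 0, ε > 0, and a ∈ ℝ with θ ≥ |a|/ε. Let μ be a probability measure on ℝ and define f_a(y) = ∫ p_θ(y - t - a) dμ(t) and f_⊥(y) = ∫ p_θ(y - t) dμ(t). Then for all y ∈ ℝ, f_a(y) ≤ e^ε · f_⊥(y) and f_⊥(y) ≤ e^ε · f_a(y). -/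
open MeasureTheory

lemma lap_pointwise (θ ε a : ℝ) (hθ : 0 < θ) (hε : 0 < ε) (hcal : |a| / ε ≤ θ)
    (z w : ℝ) (h : |z - w| ≤ |a|) :
    lap θ z ≤ Real.exp ε * lap θ w := by
  have hθ' : (0:ℝ) < 2 * θ := by linarith
  have haε : |a| ≤ ε * θ := by
    rw [div_le_iff₀ hε] at hcal; linarith [hcal]
  have h1 : |w| - |z| ≤ |a| := by
    have := abs_sub_abs_le_abs_sub w z
    have : |w - z| = |z - w| := abs_sub_comm w z
    calc |w| - |z| ≤ |w - z| := abs_sub_abs_le_abs_sub w z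
      _ = |z - w| := abs_sub_comm w z
      _ ≤ |a| := h
  have key : -|z| / θ ≤ ε + -|w| / θ := by
    rw [div_le_iff₀ hθ] at *
    have : (ε + -|w| / θ) * θ = ε * θ - |w| := by field_simp; ring
    nlinarith [this]
  have h2 : Real.exp (-|z| / θ) ≤ Real.exp ε * Real.exp (-|w| / θ) := by
    rw [← Real.exp_add]; exact Real.exp_le_exp.mpr key
  unfold lap
  rw [mul_left_comm]
  exact mul_le_mul_of_nonneg_left h2 (by positivity)

lemma lap_cont_s2 (θ : ℝ) : Continuous (lap θ) := by
  unfold lap; fun_prop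

lemma lap_integrable (θ : ℝ) (hθ : 0 < θ) (μ : Measure ℝ) [IsProbabilityMeasure μ]
    (g : ℝ → ℝ) (hg : Continuous g) : Integrable (fun t => lap θ (g t)) μ := by
  apply Integrable.mono' (integrable_const (1 / (2 * θ)))
  · exact ((lap_cont_s2 θ).comp hg).aestronglyMeasurable
  · filter_upwards with t
    have h1 : Real.exp (-|g t| / θ) ≤ 1 := Real.exp_le_one_iff.mpr (by
      apply div_nonpos_of_nonpos_of_nonneg (neg_nonpos.mpr (abs_nonneg _)) hθ.le)
    have hc : (0:ℝ) ≤ 1 / (2 * θ) := by positivity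
    rw [Real.norm_eq_abs]
    unfold lap
    rw [abs_of_nonneg (by positivity)]
    calc 1 / (2 * θ) * Real.exp (-|g t| / θ) ≤ 1 / (2 * θ) * 1 :=
          mul_le_mul_of_nonneg_left h1 hc
      _ = 1 / (2 * θ) := mul_one _

/-- Sufficient condition for `(ε, S_{a,⊥})`-pufferfish privacy: if `θ ≥ |a|/ε`, then the
noised density when the user is present reporting `a` and the noised density when the user
is absent are within a multiplicative factor `e^ε` of each other. -/
theorem pufferfish_presence_absence (θ ε a : ℝ) (hθ : 0 < θ) (hε : 0 < ε)
    (hcal : |a| / ε ≤ θ)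
    (μ : Measure ℝ) [IsProbabilityMeasure μ] (y : ℝ) :
    (∫ t, lap θ (y - t - a) ∂μ) ≤ Real.exp ε * ∫ t, lap θ (y - t) ∂μ ∧
    (∫ t, lap θ (y - t) ∂μ) ≤ Real.exp ε * ∫ t, lap θ (y - t - a) ∂μ := by
  have i1 : Integrable (fun t => lap θ (y - t - a)) μ :=
    lap_integrable θ hθ μ _ (by fun_prop)
  have i2 : Integrable (fun t => lap θ (y - t)) μ :=
    lap_integrable θ hθ μ _ (by fun_prop)
  constructor
  · rw [← integral_const_mul]
    apply integral_mono i1 (i2.const_mul _)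
    intro t
    exact lap_pointwise θ ε a hθ hε hcal _ _ (by simp [abs_neg])
  · rw [← integral_const_mul]
    apply integral_mono i2 (i1.const_mul _)
    intro t
    apply lap_pointwise θ ε a hθ hε hcal _ _
    have : y - t - (y - t - a) = a := by ring
    rw [this]
end

section
/- Let D be a Bernoulli random variable with parameter p ∈ (0,1] (P(D=1)=p, P(D=0)=1-p), and let ε > 0. Then E[e^{|D|/θ}] ≤ e^ε if and only if θ ≥ 1 / log((e^ε - (1-p))/p). Moreover, 1 / log((e^ε - (1-p))/p) ≤ 1/ε, with equality only in the limit p → 1. -/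
/-- Binary-case refinement for `(ε, S_{P,⊥})`-pufferfish privacy: for `D ∼ Bernoulli(p)`
with `p ∈ (0,1]`, `E[e^{|D|/θ}] = p e^{1/θ} + (1-p) ≤ e^ε` iff
`θ ≥ 1 / log((e^ε - (1-p))/p)`, and this threshold is at most `1/ε`. -/
theorem bernoulli_moment_condition_iff (p ε θ : ℝ) (hp0 : 0 < p) (hp1 : p ≤ 1)
    (hε : 0 < ε) (hθ : 0 < θ) :
    (p * Real.exp (1 / θ) + (1 - p) ≤ Real.exp ε ↔
      1 / Real.log ((Real.exp ε - (1 - p)) / p) ≤ θ) ∧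
    1 / Real.log ((Real.exp ε - (1 - p)) / p) ≤ 1 / ε := by
  set c : ℝ := (Real.exp ε - (1 - p)) / p with hc
  have hexp1 : 1 < Real.exp ε := by nlinarith [Real.add_one_le_exp ε]
  have hc1 : 1 < c := by
    rw [hc, lt_div_iff₀ hp0]
    nlinarith
  have hlogc : 0 < Real.log c := Real.log_pos hc1
  have hcε : Real.exp ε ≤ c := by
    rw [hc, le_div_iff₀ hp0]
    nlinarith
  have hεlog : ε ≤ Real.log c := by
    have := Real.log_le_log (Real.exp_pos ε) hcε
    rwa [Real.log_exp] at this
  constructor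
  · constructor
    · intro h
      have h1 : Real.exp (1 / θ) ≤ c := by
        rw [hc, le_div_iff₀ hp0]
        nlinarith
      have h2 : 1 / θ ≤ Real.log c := by
        have := Real.log_le_log (Real.exp_pos _) h1
        rwa [Real.log_exp] at this
      rw [div_le_iff₀ hθ] at h2
      rw [div_le_iff₀ hlogc]
      linarith [mul_comm θ (Real.log c)]
    · intro h
      rw [div_le_iff₀ hlogc] at h
      have h2 : 1 / θ ≤ Real.log c := by
        rw [div_le_iff₀ hθ]
        linarith [mul_comm θ (Real.log c)]
      have h1 : Real.exp (1 / θ) ≤ c := by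
        calc Real.exp (1 / θ) ≤ Real.exp (Real.log c) := Real.exp_le_exp.2 h2
          _ = c := Real.exp_log (by linarith)
      rw [hc, le_div_iff₀ hp0] at h1
      nlinarith
  · exact one_div_le_one_div_of_le hε hεlog
end

section
/- Let p, q ∈ [0,1] with p < q, let S be an integer-valued random variable with P(S = x) > 0 for relevant x, and let π be the comonotone coupling of S + D (D ∼ Bernoulli(p)) and S + D' (D' ∼ Bernoulli(q)). Then for each integer x': π({(x', x')}) = p·P(S = x'-1) + (1-q)·P(S = x'), and π({(x'-1, x')}) = (q - p)·P(S = x'-1), and π assigns zero mass to all other pairs (x, x') with x ∉ {x'-1, x'}. -/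
open MeasureTheory

/-- The Bernoulli(p) distribution on `ℤ`. -/
noncomputable def bern (p : ℝ) : Measure ℤ :=
  ENNReal.ofReal p • Measure.dirac (1 : ℤ) + ENNReal.ofReal (1 - p) • Measure.dirac (0 : ℤ)

/-- CDF of a measure on `ℤ`. -/
noncomputable def cdf (ν : Measure ℤ) (x : ℤ) : ℝ := (ν (Set.Iic x)).toReal

/-- Joint CDF of the comonotone coupling of two measures on `ℤ`. -/
noncomputable def jcdf (ν ν' : Measure ℤ) (x x' : ℤ) : ℝ := min (cdf ν x) (cdf ν' x')

/-- Point mass of the comonotone coupling at `(x, x')`, as a rectangular second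
difference of the joint CDF. -/
noncomputable def pointMass (ν ν' : Measure ℤ) (x x' : ℤ) : ℝ :=
  jcdf ν ν' x x' - jcdf ν ν' (x - 1) x' - jcdf ν ν' x (x' - 1) + jcdf ν ν' (x - 1) (x' - 1)

instance bern_sfinite (p : ℝ) : SFinite (bern p) := by unfold bern; infer_instance

lemma conv_bern_Iic (μ : Measure ℤ) [IsProbabilityMeasure μ] (p : ℝ)
    (hp0 : 0 ≤ p) (hp1 : p ≤ 1) (x : ℤ) :
    cdf (μ.conv (bern p)) x = p * cdf μ (x - 1) + (1 - p) * cdf μ x := by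
  have hmeas : ∀ s : Set ℤ, MeasurableSet s := fun s => (Set.to_countable s).measurableSet
  have h1 : (μ.conv (bern p)) (Set.Iic x)
      = ∫⁻ a, bern p (Prod.mk a ⁻¹' ((fun z : ℤ × ℤ => z.1 + z.2) ⁻¹' Set.Iic x)) ∂μ := by
    rw [Measure.conv, Measure.map_apply (by fun_prop) (hmeas _),
      Measure.prod_apply ((Set.to_countable _).measurableSet)]
  have h2 : ∀ a : ℤ, bern p (Prod.mk a ⁻¹' ((fun z : ℤ × ℤ => z.1 + z.2) ⁻¹' Set.Iic x))
      = ENNReal.ofReal p * (Set.Iic (x-1)).indicator 1 a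
        + ENNReal.ofReal (1-p) * (Set.Iic x).indicator 1 a := by
    intro a
    have hset : Prod.mk a ⁻¹' ((fun z : ℤ × ℤ => z.1 + z.2) ⁻¹' Set.Iic x)
        = {y : ℤ | a + y ≤ x} := rfl
    rw [hset]
    simp only [bern, Measure.add_apply, Measure.smul_apply, smul_eq_mul,
      Measure.dirac_apply' _ (hmeas _)]
    congr 1
    · congr 1
      simp only [Set.indicator_apply, Set.mem_setOf_eq, Set.mem_Iic, Pi.one_apply]
      exact if_congr (by omega) rfl rfl
    · congr 1
      simp only [Set.indicator_apply, Set.mem_setOf_eq, Set.mem_Iic, Pi.one_apply]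
      exact if_congr (by omega) rfl rfl
  rw [cdf, h1]
  simp_rw [h2]
  rw [lintegral_add_left (by fun_prop), lintegral_const_mul _ (by fun_prop),
    lintegral_const_mul _ (by fun_prop), lintegral_indicator_one (hmeas _),
    lintegral_indicator_one (hmeas _)]
  rw [ENNReal.toReal_add, ENNReal.toReal_mul, ENNReal.toReal_mul,
    ENNReal.toReal_ofReal hp0, ENNReal.toReal_ofReal (by linarith)]
  · rfl
  · exact ENNReal.mul_ne_top ENNReal.ofReal_ne_top (measure_ne_top μ _)
  · exact ENNReal.mul_ne_top ENNReal.ofReal_ne_top (measure_ne_top μ _)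

lemma cdf_mono (μ : Measure ℤ) [IsProbabilityMeasure μ] {a b : ℤ} (h : a ≤ b) :
    cdf μ a ≤ cdf μ b :=
  ENNReal.toReal_mono (measure_ne_top μ _) (measure_mono (Set.Iic_subset_Iic.mpr h))

lemma cdf_step (μ : Measure ℤ) [IsProbabilityMeasure μ] (x : ℤ) :
    cdf μ x = cdf μ (x - 1) + (μ {x}).toReal := by
  have hset : Set.Iic x = insert x (Set.Iic (x - 1)) := by
    ext y; simp only [Set.mem_Iic, Set.mem_insert_iff]; omega
  rw [cdf, hset, Set.insert_eq,
    measure_union (by simp only [Set.disjoint_singleton_left, Set.mem_Iic]; omega)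
      ((Set.to_countable _).measurableSet),
    ENNReal.toReal_add (measure_ne_top μ _) (measure_ne_top μ _), cdf, add_comm]

/-- Mass computation for the comonotone coupling of `S + D` and `S + D'` with
`D ∼ Bernoulli(p)`, `D' ∼ Bernoulli(q)`, `p < q`: the coupling puts mass
`p·P(S = x'-1) + (1-q)·P(S = x')` on `(x', x')`, mass `(q-p)·P(S = x'-1)` on
`(x'-1, x')`, and zero mass on every other pair `(x, x')`. -/
theorem comonotone_bernoulli_masses (μ : Measure ℤ) [IsProbabilityMeasure μ]
    (p q : ℝ) (hp0 : 0 ≤ p) (hq1 : q ≤ 1) (hpq : p < q)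
    (hpos : ∀ x : ℤ, 0 < (μ {x}).toReal) (x' : ℤ) :
    pointMass (μ.conv (bern p)) (μ.conv (bern q)) x' x'
        = p * (μ {x' - 1}).toReal + (1 - q) * (μ {x'}).toReal ∧
    pointMass (μ.conv (bern p)) (μ.conv (bern q)) (x' - 1) x'
        = (q - p) * (μ {x' - 1}).toReal ∧
    (∀ x : ℤ, x ≠ x' - 1 → x ≠ x' →
      pointMass (μ.conv (bern p)) (μ.conv (bern q)) x x' = 0) := by
  have hp1 : p ≤ 1 := le_of_lt (lt_of_lt_of_le hpq hq1)
  have hq0 : 0 ≤ q := le_trans hp0 (le_of_lt hpq)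
  set F : ℤ → ℝ := cdf μ with hF
  set m : ℤ → ℝ := fun x => (μ {x}).toReal with hm
  have hm0 : ∀ x, 0 ≤ m x := fun x => ENNReal.toReal_nonneg
  have hstep : ∀ x, F x = F (x - 1) + m x := fun x => cdf_step μ x
  have hGp : ∀ y, cdf (μ.conv (bern p)) y = F y - p * m y := by
    intro y
    rw [conv_bern_Iic μ p hp0 hp1 y]
    have := hstep y; simp only [hF, hm] at *; nlinarith [this]
  have hGq : ∀ y, cdf (μ.conv (bern q)) y = F y - q * m y := by
    intro y
    rw [conv_bern_Iic μ q hq0 hq1 y]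
    have := hstep y; simp only [hF, hm] at *; nlinarith [this]
  have hGpmono : ∀ a b : ℤ, a ≤ b →
      cdf (μ.conv (bern p)) a ≤ cdf (μ.conv (bern p)) b := by
    intro a b hab
    rw [conv_bern_Iic μ p hp0 hp1 a, conv_bern_Iic μ p hp0 hp1 b]
    have h1 : F (a - 1) ≤ F (b - 1) := cdf_mono μ (by omega)
    have h2 : F a ≤ F b := cdf_mono μ hab
    nlinarith
  -- jcdf on or below the diagonal (x' ≤ x): equals G_q x'
  have hmin1 : ∀ a b : ℤ, b ≤ a →
      jcdf (μ.conv (bern p)) (μ.conv (bern q)) a b = F b - q * m b := by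
    intro a b hba
    have h1 : cdf (μ.conv (bern q)) b ≤ cdf (μ.conv (bern p)) b := by
      rw [hGp, hGq]; nlinarith [hm0 b]
    have h2 := hGpmono b a hba
    rw [jcdf, min_eq_right (le_trans h1 h2), hGq]
  -- jcdf strictly above the diagonal (a ≤ b - 1): equals G_p a
  have hmin2 : ∀ a b : ℤ, a ≤ b - 1 →
      jcdf (μ.conv (bern p)) (μ.conv (bern q)) a b = F a - p * m a := by
    intro a b hab
    have h1 : cdf (μ.conv (bern p)) a ≤ cdf (μ.conv (bern p)) (b - 1) := hGpmono a (b-1) hab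
    have h2 : cdf (μ.conv (bern p)) (b - 1) ≤ F (b - 1) := by
      rw [hGp]; nlinarith [hm0 (b - 1)]
    have h3 : F (b - 1) ≤ cdf (μ.conv (bern q)) b := by
      rw [hGq]; have := hstep b; nlinarith [hm0 b]
    rw [jcdf, min_eq_left (le_trans (le_trans h1 h2) h3), hGp]
  refine ⟨?_, ?_, ?_⟩
  · rw [pointMass, hmin1 x' x' le_rfl, hmin2 (x' - 1) x' le_rfl,
      hmin1 x' (x' - 1) (by omega), hmin1 (x' - 1) (x' - 1) le_rfl]
    have := hstep x'
    simp only [hF, hm] at *; linarith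
  · rw [pointMass, hmin2 (x' - 1) x' le_rfl, hmin2 (x' - 1 - 1) x' (by omega),
      hmin1 (x' - 1) (x' - 1) le_rfl, hmin2 (x' - 1 - 1) (x' - 1) (by omega)]
    simp only [hF, hm] at *; ring
  · intro x hx1 hx2
    rcases lt_or_gt_of_ne hx2 with hlt | hgt
    · have hle : x ≤ x' - 2 := by omega
      rw [pointMass, hmin2 x x' (by omega), hmin2 (x - 1) x' (by omega),
        hmin2 x (x' - 1) (by omega), hmin2 (x - 1) (x' - 1) (by omega)]
      ring
    · rw [pointMass, hmin1 x x' (by omega), hmin1 (x - 1) x' (by omega),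
        hmin1 x (x' - 1) (by omega), hmin1 (x - 1) (x' - 1) (by omega)]
      ring
end
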